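/- arXiv:1505.03256 — 3 statements merged into one kernel-verified Lean document; each statement's English description precedes it below -/
import Mathlib

section
/- Let X and Y be jointly distributed random variables taking values in finite sets, and let f be a function defined on the support of Y. For every α ≥ 1, the first conditional THC entropy satisfies H_α(X | f(Y)) ≥ H_α(X | Y). -/
open Finset

/-- The α-logarithm: `ln_α(ξ) = (ξ^(1-α) - 1)/(1-α)` for `α ≠ 1`, and `ln ξ` for `α = 1`. -/
noncomputable def alphaLog (α ξ : ℝ) : ℝ :=
  if α = 1 then Real.log ξ else (ξ ^ (1 - α) - 1) / (1 - α)

/-- The Tsallis–Havrda–Charvát entropy of order `α` of a pmf `p` on a finite set. -/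
noncomputable def thc (α : ℝ) {S : Type*} [Fintype S] (p : S → ℝ) : ℝ :=
  if α = 1 then -∑ s, p s * Real.log (p s)
  else ((∑ s, p s ^ α) - 1) / (1 - α)

/-- The binary THC entropy `h_α(q)`. -/
noncomputable def binThc (α q : ℝ) : ℝ :=
  if α = 1 then -(q * Real.log q) - (1 - q) * Real.log (1 - q)
  else (q ^ α + (1 - q) ^ α - 1) / (1 - α)

/-- First conditional THC entropy (Daróczy form): `H_α(X|Y) = Σ_y p(y)^α H_α(X|y)`,
where `p` is the joint pmf of `(X, Y)`.  (Terms with `p(y) = 0` vanish for `α > 0`.) -/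
noncomputable def condThc1 (α : ℝ) {SX SY : Type*} [Fintype SX] [Fintype SY]
    (p : SX × SY → ℝ) : ℝ :=
  ∑ y, (∑ x, p (x, y)) ^ α * thc α (fun x => p (x, y) / ∑ x', p (x', y))

/-- Second conditional THC entropy: `H̃_α(X|Y) = Σ_y p(y) H_α(X|y)`,
where `p` is the joint pmf of `(X, Y)`.  (Terms with `p(y) = 0` vanish.) -/
noncomputable def condThc2 (α : ℝ) {SX SY : Type*} [Fintype SX] [Fintype SY]
    (p : SX × SY → ℝ) : ℝ :=
  ∑ y, (∑ x, p (x, y)) * thc α (fun x => p (x, y) / ∑ x', p (x', y))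

/-- The pmf of a random variable `X` defined on a finite sample space with pmf `μ`. -/
noncomputable def distOf {Ω S : Type*} [Fintype Ω] [DecidableEq S]
    (μ : Ω → ℝ) (X : Ω → S) : S → ℝ :=
  fun s => ∑ ω ∈ Finset.univ.filter (fun ω => X ω = s), μ ω

/-! ### Auxiliary lemmas -/

lemma thc_nonneg' {S : Type*} [Fintype S] {α : ℝ} (hα : 1 ≤ α) (v : S → ℝ)
    (hv : ∀ s, 0 ≤ v s) (hv1 : ∑ s, v s = 1) : 0 ≤ thc α v := by
  have hvle : ∀ s, v s ≤ 1 := by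
    intro s
    calc v s ≤ ∑ s', v s' := Finset.single_le_sum (fun s' _ => hv s') (mem_univ s)
    _ = 1 := hv1
  unfold thc
  split_ifs with h
  · rw [neg_nonneg]
    exact Finset.sum_nonpos fun s _ => Real.mul_log_nonpos (hv s) (hvle s)
  · have hαpos : α ≠ 0 := by intro h0; rw [h0] at hα; linarith
    have hsum : ∑ s, v s ^ α ≤ 1 := by
      rw [← hv1]
      refine Finset.sum_le_sum fun s _ => ?_
      rcases eq_or_lt_of_le (hv s) with h0 | h0
      · rw [← h0, Real.zero_rpow hαpos]
      · calc v s ^ α ≤ v s ^ (1 : ℝ) :=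
              Real.rpow_le_rpow_of_exponent_ge h0 (hvle s) hα
          _ = v s := Real.rpow_one _
    apply div_nonneg_of_nonpos <;> linarith

lemma jensen_thc {S T : Type*} [Fintype S] {α : ℝ} (hα : 1 ≤ α)
    (t : Finset T) (w : T → ℝ) (hw : ∀ y ∈ t, 0 ≤ w y) (hw1 : ∑ y ∈ t, w y = 1)
    (v : T → S → ℝ) (hv : ∀ y s, 0 ≤ v y s) :
    ∑ y ∈ t, w y * thc α (v y) ≤ thc α (fun s => ∑ y ∈ t, w y * v y s) := by
  unfold thc
  split_ifs with h
  · -- α = 1 : Shannon case via concavity of negMulLog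
    have hneg : ∀ u : S → ℝ, (-∑ s, u s * Real.log (u s)) = ∑ s, Real.negMulLog (u s) := by
      intro u
      rw [← Finset.sum_neg_distrib]
      exact Finset.sum_congr rfl fun s _ => by rw [Real.negMulLog, neg_mul]
    simp only [hneg]
    calc ∑ y ∈ t, w y * ∑ s, Real.negMulLog (v y s)
        = ∑ s, ∑ y ∈ t, w y * Real.negMulLog (v y s) := by
          rw [Finset.sum_comm]
          exact Finset.sum_congr rfl fun y _ => Finset.mul_sum _ _ _
      _ ≤ ∑ s, Real.negMulLog (∑ y ∈ t, w y * v y s) := by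
          refine Finset.sum_le_sum fun s _ => ?_
          have := Real.concaveOn_negMulLog.le_map_sum (t := t) (w := w)
            (p := fun y => v y s) hw hw1 (fun y _ => hv y s)
          simpa [smul_eq_mul] using this
  · -- α > 1 : power case via convexity of rpow
    have hα1 : 1 < α := lt_of_le_of_ne hα (Ne.symm h)
    have hden : 1 - α < 0 := by linarith
    have hsplit : ∀ y, w y * (((∑ s, v y s ^ α) - 1) / (1 - α))
        = (w y * ((∑ s, v y s ^ α) - 1)) / (1 - α) := fun y => (mul_div_assoc _ _ _).symm
    simp only [hsplit]
    rw [← Finset.sum_div, div_le_div_right_of_neg hden]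
    have hJ : ∑ s, (∑ y ∈ t, w y * v y s) ^ α ≤ ∑ y ∈ t, w y * ∑ s, v y s ^ α := by
      calc ∑ s, (∑ y ∈ t, w y * v y s) ^ α
          ≤ ∑ s, ∑ y ∈ t, w y * v y s ^ α := by
            refine Finset.sum_le_sum fun s _ => ?_
            have := (convexOn_rpow hα).map_sum_le (t := t) (w := w)
              (p := fun y => v y s) hw hw1 (fun y _ => hv y s)
            simpa [smul_eq_mul] using this
        _ = ∑ y ∈ t, w y * ∑ s, v y s ^ α := by
            rw [Finset.sum_comm]
            exact Finset.sum_congr rfl fun y _ => (Finset.mul_sum _ _ _).symm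
    have hexp : ∑ y ∈ t, w y * ((∑ s, v y s ^ α) - 1)
        = (∑ y ∈ t, w y * ∑ s, v y s ^ α) - 1 := by
      have : ∀ y ∈ t, w y * ((∑ s, v y s ^ α) - 1)
          = w y * ∑ s, v y s ^ α - w y := fun y _ => by ring
      rw [Finset.sum_congr rfl this, Finset.sum_sub_distrib, hw1]
    rw [hexp]
    linarith

/-- Key inequality: grouping the conditioning variable can only increase `condThc1`. -/
lemma key_ineq {SX SY : Type*} [Fintype SX] {α : ℝ} (hα : 1 ≤ α)
    (t : Finset SY) (a : SX → SY → ℝ) (ha : ∀ x y, 0 ≤ a x y) :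
    ∑ y ∈ t, (∑ x, a x y) ^ α * thc α (fun x => a x y / ∑ x', a x' y) ≤
      (∑ x, ∑ y ∈ t, a x y) ^ α *
        thc α (fun x => (∑ y ∈ t, a x y) / ∑ x', ∑ y ∈ t, a x' y) := by
  have hα0 : α ≠ 0 := by intro h0; rw [h0] at hα; linarith
  set S : ℝ := ∑ x, ∑ y ∈ t, a x y with hSdef
  have hSnn : 0 ≤ S := Finset.sum_nonneg fun x _ =>
    Finset.sum_nonneg fun y _ => ha x y
  have hswap : S = ∑ y ∈ t, ∑ x, a x y := Finset.sum_comm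
  rcases eq_or_lt_of_le hSnn with h0 | hpos
  · -- total mass zero: both sides vanish
    have hy0 : ∀ y ∈ t, (∑ x, a x y) = 0 := by
      have := (Finset.sum_eq_zero_iff_of_nonneg
        (fun y _ => Finset.sum_nonneg fun x _ => ha x y)).mp (hswap ▸ h0.symm)
      exact this
    have hL : ∀ y ∈ t, (∑ x, a x y) ^ α * thc α (fun x => a x y / ∑ x', a x' y) = 0 := by
      intro y hy
      rw [hy0 y hy, Real.zero_rpow hα0, zero_mul]
    rw [Finset.sum_eq_zero hL, ← h0, Real.zero_rpow hα0, zero_mul]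
  · -- positive total mass
    set w : SY → ℝ := fun y => (∑ x, a x y) / S with hwdef
    have hsy_nn : ∀ y, 0 ≤ ∑ x, a x y := fun y =>
      Finset.sum_nonneg fun x _ => ha x y
    have hw0 : ∀ y ∈ t, 0 ≤ w y := fun y _ => div_nonneg (hsy_nn y) hSnn
    have hw1 : ∑ y ∈ t, w y = 1 := by
      rw [hwdef]
      rw [← Finset.sum_div, ← hswap, div_self (ne_of_gt hpos)]
    have hwle : ∀ y ∈ t, w y ≤ 1 := by
      intro y hy
      rw [hwdef]
      apply div_le_one_of_le₀ _ hSnn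
      rw [hswap]
      exact Finset.single_le_sum (fun y' _ => hsy_nn y') hy
    set v : SY → SX → ℝ := fun y x => a x y / ∑ x', a x' y with hvdef
    have hv : ∀ y x, 0 ≤ v y x := fun y x => div_nonneg (ha x y) (hsy_nn y)
    have hveq : ∀ y : SY, (fun x => a x y / ∑ x', a x' y) = v y := fun _ => rfl
    -- the conditional of the grouped variable is the w-mixture of the v y
    have hmix : ∀ x, (∑ y ∈ t, a x y) / S = ∑ y ∈ t, w y * v y x := by
      intro x
      rw [Finset.sum_div]
      refine Finset.sum_congr rfl fun y hy => ?_
      rcases eq_or_lt_of_le (hsy_nn y) with hz | hz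
      · have hax : a x y = 0 := by
          have := (Finset.sum_eq_zero_iff_of_nonneg (fun x' _ => ha x' y)).mp hz.symm
          exact this x (mem_univ x)
        simp [hwdef, hvdef, hax]
      · rw [hwdef, hvdef]
        field_simp
    have hthc_nn : ∀ y ∈ t, 0 < ∑ x, a x y → 0 ≤ thc α (v y) := by
      intro y _ hz
      refine thc_nonneg' hα _ (hv y) ?_
      rw [hvdef]
      rw [← Finset.sum_div, div_self (ne_of_gt hz)]
    simp only [hveq]
    calc ∑ y ∈ t, (∑ x, a x y) ^ α * thc α (v y)
        = ∑ y ∈ t, S ^ α * (w y ^ α * thc α (v y)) := by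
          refine Finset.sum_congr rfl fun y hy => ?_
          have hws : (∑ x, a x y) = w y * S := by
            simp only [hwdef]; field_simp
          rw [hws, Real.mul_rpow (hw0 y hy) hSnn]
          ring
      _ = S ^ α * ∑ y ∈ t, w y ^ α * thc α (v y) := by rw [← Finset.mul_sum]
      _ ≤ S ^ α * ∑ y ∈ t, w y * thc α (v y) := by
          refine mul_le_mul_of_nonneg_left ?_ (Real.rpow_nonneg hSnn α)
          refine Finset.sum_le_sum fun y hy => ?_
          rcases eq_or_lt_of_le (hsy_nn y) with hz | hz
          · have hwz : w y = 0 := by simp only [hwdef]; rw [← hz, zero_div]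
            simp [hwz, Real.zero_rpow hα0]
          · have hwpos : 0 < w y := div_pos hz hpos
            have : w y ^ α ≤ w y := by
              calc w y ^ α ≤ w y ^ (1 : ℝ) :=
                    Real.rpow_le_rpow_of_exponent_ge hwpos (hwle y hy) hα
                _ = w y := Real.rpow_one _
            exact mul_le_mul_of_nonneg_right this (hthc_nn y hy hz)
      _ ≤ S ^ α * thc α (fun x => ∑ y ∈ t, w y * v y x) := by
          exact mul_le_mul_of_nonneg_left
            (jensen_thc hα t w hw0 hw1 v hv) (Real.rpow_nonneg hSnn α)
      _ = S ^ α * thc α (fun x => (∑ y ∈ t, a x y) / S) := by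
          congr 1
          exact congrArg (thc α) (funext fun x => (hmix x).symm)

lemma distOf_nonneg {Ω S : Type*} [Fintype Ω] [DecidableEq S]
    (μ : Ω → ℝ) (hμ : ∀ ω, 0 ≤ μ ω) (X : Ω → S) (s : S) : 0 ≤ distOf μ X s :=
  Finset.sum_nonneg fun ω _ => hμ ω

lemma distOf_comp_fiber {Ω SX SY U : Type*} [Fintype Ω] [Fintype SY]
    [DecidableEq SX] [DecidableEq SY] [DecidableEq U]
    (μ : Ω → ℝ) (X : Ω → SX) (Y : Ω → SY) (f : SY → U) (x : SX) (u : U) :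
    distOf μ (fun ω => (X ω, f (Y ω))) (x, u)
      = ∑ y ∈ Finset.univ.filter (fun y => f y = u),
          distOf μ (fun ω => (X ω, Y ω)) (x, y) := by
  unfold distOf
  rw [← Finset.sum_fiberwise_of_maps_to (g := Y)
    (t := Finset.univ.filter fun y => f y = u)
    (s := Finset.univ.filter fun ω => (X ω, f (Y ω)) = (x, u))
    (fun ω hω => by
      simp only [mem_filter, mem_univ, true_and, Prod.mk.injEq] at hω ⊢
      exact hω.2) μ]
  refine Finset.sum_congr rfl fun y hy => ?_
  simp only [mem_filter, mem_univ, true_and] at hy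
  refine Finset.sum_congr ?_ fun _ _ => rfl
  ext ω
  simp only [mem_filter, mem_univ, true_and, Prod.mk.injEq]
  constructor
  · rintro ⟨⟨hx, -⟩, hyy⟩; exact ⟨hx, hyy⟩
  · rintro ⟨hx, hyy⟩; exact ⟨⟨hx, by rw [hyy, hy]⟩, hyy⟩

/-- For jointly distributed random variables `X`, `Y` on finite sets and a
function `f` of `Y`, the first conditional THC entropy satisfies
`H_α(X | f(Y)) ≥ H_α(X | Y)` for every `α ≥ 1`. -/
theorem condThc1_comp_ge {Ω SX SY U : Type*} [Fintype Ω] [Fintype SX] [Fintype SY] [Fintype U]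
    [DecidableEq SX] [DecidableEq SY] [DecidableEq U]
    (μ : Ω → ℝ) (hμ : ∀ ω, 0 ≤ μ ω) (hμ1 : ∑ ω, μ ω = 1)
    (X : Ω → SX) (Y : Ω → SY) (f : SY → U)
    (α : ℝ) (hα : 1 ≤ α) :
    condThc1 α (distOf μ (fun ω => (X ω, f (Y ω)))) ≥
      condThc1 α (distOf μ (fun ω => (X ω, Y ω))) := by
  classical
  rw [ge_iff_le]
  unfold condThc1
  rw [← Finset.sum_fiberwise_of_maps_to (g := f) (t := (Finset.univ : Finset U))
    (s := (Finset.univ : Finset SY)) (fun y _ => mem_univ _)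
    (fun y => (∑ x, distOf μ (fun ω => (X ω, Y ω)) (x, y)) ^ α *
      thc α (fun x => distOf μ (fun ω => (X ω, Y ω)) (x, y) /
        ∑ x', distOf μ (fun ω => (X ω, Y ω)) (x', y)))]
  refine Finset.sum_le_sum fun u _ => ?_
  have hkey := key_ineq (SX := SX) hα (Finset.univ.filter fun y => f y = u)
    (fun x y => distOf μ (fun ω => (X ω, Y ω)) (x, y))
    (fun x y => distOf_nonneg μ hμ _ _)
  simp only [distOf_comp_fiber μ X Y f]
  exact hkey
end

section
/- Let 𝓖 = {G₁, …, G_m} be a family of m distinct k-element subsets of {1, …, n} (m ≥ 2, k ≥ 1) such that for any two unordered pairs of indices {i,j} ≠ {s,t} one has G_i ∩ G_j ≠ G_s ∩ G_t. For each j ∈ {1, …, n} let λ_j be the proportion of members of 𝓖 that contain j, and set λ = Σ_{j=1}^n λ_j²/k. If λ_j ≤ 1/√2 for all j ∈ {1, …, n}, then for every α ∈ [1, 3.67]: ln_α(binom(m,2)) ≤ k · h_α(λ²)/λ. -/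
open Finset

/-!
The pairwise intersections `G i ∩ G j` are `binom(m,2)` distinct sets, and a point `j` lies in a
fraction `binom(d_j,2)/binom(m,2) ≤ λ_j²` of them, where `d_j = m λ_j`. The THC entropy of the
uniform distribution on a family of sets is subadditive over the coordinates (induction on the
ground set, via the chain rule and concavity of `h_α`), which bounds `ln_α binom(m,2)` by
`Σ_j h_α` of these fractions, hence by `Σ_j h_α(λ_j²)` as `h_α` increases on `[0, 1/2]`.
Finally `x ↦ h_α(x²)/x` is concave on `(0, 1/√2]` for `1 ≤ α ≤ 3.67` (a second-derivative
estimate), and Jensen's inequality with the weights `λ_j / k`, which sum to `1`, gives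
`Σ_j h_α(λ_j²) ≤ k h_α(λ²)/λ`.
-/

lemma alphaLog_one_right (α : ℝ) : alphaLog α 1 = 0 := by
  simp [alphaLog]

lemma alphaLog_nonneg (α : ℝ) {ξ : ℝ} (hξ : 1 ≤ ξ) : 0 ≤ alphaLog α ξ := by
  unfold alphaLog
  split_ifs with hα
  · exact Real.log_nonneg hξ
  rcases lt_or_gt_of_ne hα with hα | hα
  · exact div_nonneg (sub_nonneg.2 (Real.one_le_rpow hξ (by linarith))) (by linarith)
  · exact div_nonneg_of_nonpos
      (sub_nonpos.2 (Real.rpow_le_one_of_one_le_of_nonpos hξ (by linarith))) (by linarith)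

lemma binThc_one_left : binThc 1 = Real.binEntropy := by
  ext q
  simp only [binThc, if_true, Real.binEntropy, Real.log_inv]
  ring

lemma binThc_of_ne_one {α : ℝ} (hα : α ≠ 1) (q : ℝ) :
    binThc α q = (q ^ α + (1 - q) ^ α - 1) / (1 - α) :=
  if_neg hα

lemma binThc_one_sub (α q : ℝ) : binThc α (1 - q) = binThc α q := by
  by_cases hα : α = 1
  · simp [hα, binThc_one_left]
  · simp only [binThc_of_ne_one hα, sub_sub_cancel]
    ring

lemma binThc_zero_right {α : ℝ} (hα : α ≠ 0) : binThc α 0 = 0 := by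
  by_cases hα1 : α = 1
  · simp [hα1, binThc_one_left]
  · simp [binThc_of_ne_one hα1, Real.zero_rpow hα]

lemma binThc_one_right {α : ℝ} (hα : α ≠ 0) : binThc α 1 = 0 := by
  simpa using (binThc_one_sub α 0).trans (binThc_zero_right hα)

/-- The chain rule of the THC entropy, for a uniform distribution split into two blocks. -/
lemma alphaLog_add (α : ℝ) {a b : ℝ} (ha : 0 < a) (hb : 0 < b) :
    alphaLog α (a + b) = binThc α (b / (a + b)) + (a / (a + b)) ^ α * alphaLog α a
      + (b / (a + b)) ^ α * alphaLog α b := by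
  have hN : 0 < a + b := by linarith
  have hcompl : 1 - b / (a + b) = a / (a + b) := by field_simp; ring
  by_cases hα : α = 1
  · subst hα
    simp only [alphaLog, binThc, if_true, Real.rpow_one, hcompl]
    rw [Real.log_div hb.ne' hN.ne', Real.log_div ha.ne' hN.ne']
    field_simp
    ring
  · have hα' : 1 - α ≠ 0 := sub_ne_zero.2 (Ne.symm hα)
    have rpow_one_sub (x : ℝ) (hx : 0 < x) : x ^ (1 - α) = x / x ^ α := by
      rw [Real.rpow_sub hx, Real.rpow_one]
    simp only [alphaLog, if_neg hα, binThc_of_ne_one hα, hcompl,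
      Real.div_rpow ha.le hN.le, Real.div_rpow hb.le hN.le, rpow_one_sub _ ha, rpow_one_sub _ hb,
      rpow_one_sub _ hN]
    have := Real.rpow_pos_of_pos ha α
    have := Real.rpow_pos_of_pos hb α
    have := Real.rpow_pos_of_pos hN α
    field_simp
    ring

lemma concaveOn_binThc {α : ℝ} (hα : 1 ≤ α) : ConcaveOn ℝ (Set.Icc 0 1) (binThc α) := by
  rcases hα.eq_or_lt with rfl | hα
  · rw [binThc_one_left]
    exact Real.strictConcave_binEntropy.concaveOn
  have hpow : ConvexOn ℝ (Set.Icc 0 1) fun q : ℝ => q ^ α :=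
    (convexOn_rpow hα.le).subset (fun q hq => hq.1) (convex_Icc 0 1)
  have hrefl : ConvexOn ℝ (Set.Icc 0 1) fun q : ℝ => (1 - q) ^ α := by
    refine ⟨convex_Icc 0 1, fun x hx y hy a b ha hb hab => ?_⟩
    have := hpow.2 (x := 1 - x) (y := 1 - y) ⟨by linarith [hx.2], by linarith [hx.1]⟩
      ⟨by linarith [hy.2], by linarith [hy.1]⟩ ha hb hab
    simp only [smul_eq_mul] at this ⊢
    rwa [show 1 - (a * x + b * y) = a * (1 - x) + b * (1 - y) by linear_combination -hab]
  have hconv := (hpow.add hrefl).sub (concaveOn_const 1 (convex_Icc 0 1))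
  refine (hconv.neg.smul (inv_nonneg.2 (sub_nonneg.2 hα.le))).congr fun q _ => ?_
  simp only [Pi.neg_apply, Pi.sub_apply, Pi.add_apply, smul_eq_mul, binThc_of_ne_one hα.ne']
  have : 1 - α ≠ 0 := (sub_neg.2 hα).ne
  field_simp
  ring

lemma ConcaveOn.monotoneOn_of_one_sub {f : ℝ → ℝ} (hf : ConcaveOn ℝ (Set.Icc 0 1) f)
    (hsymm : ∀ q, f (1 - q) = f q) : MonotoneOn f (Set.Icc 0 (1 / 2)) := by
  intro p hp q hq hpq
  have := hf.min_le_of_mem_Icc (x := p) (y := 1 - p) ⟨hp.1, by linarith [hp.2]⟩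
    ⟨by linarith [hp.2], by linarith [hp.1]⟩ ⟨hpq, by linarith [hq.2]⟩
  rwa [hsymm, min_self] at this

lemma monotoneOn_binThc {α : ℝ} (hα : 1 ≤ α) : MonotoneOn (binThc α) (Set.Icc 0 (1 / 2)) :=
  (concaveOn_binThc hα).monotoneOn_of_one_sub (binThc_one_sub α)

lemma ConcaveOn.mul_div_add_mul_div_le {f : ℝ → ℝ} (hf : ConcaveOn ℝ (Set.Icc 0 1) f)
    {a b x y : ℝ} (hx : 0 ≤ x) (hxa : x ≤ a) (hy : 0 ≤ y) (hyb : y ≤ b) :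
    a * f (x / a) + b * f (y / b) ≤ (a + b) * f ((x + y) / (a + b)) := by
  rcases (hx.trans hxa).eq_or_lt with rfl | ha
  · obtain rfl : x = 0 := le_antisymm hxa hx
    simp
  rcases (hy.trans hyb).eq_or_lt with rfl | hb
  · obtain rfl : y = 0 := le_antisymm hyb hy
    simp
  have hab : 0 < a + b := add_pos ha hb
  have key := hf.2 (x := x / a) (y := y / b) ⟨by positivity, (div_le_one ha).2 hxa⟩
    ⟨by positivity, (div_le_one hb).2 hyb⟩ (div_nonneg ha.le hab.le) (div_nonneg hb.le hab.le)
    (by field_simp)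
  have hmix : a / (a + b) * (x / a) + b / (a + b) * (y / b) = (x + y) / (a + b) := by
    field_simp
  simp only [smul_eq_mul, hmix] at key
  calc a * f (x / a) + b * f (y / b)
      = (a + b) * (a / (a + b) * f (x / a) + b / (a + b) * f (y / b)) := by field_simp
    _ ≤ (a + b) * f ((x + y) / (a + b)) := mul_le_mul_of_nonneg_left key hab.le

lemma mul_alphaLog_add_le {α : ℝ} (hα : 1 ≤ α) (a b : ℕ) :
    ((a : ℝ) + b) * alphaLog α (a + b) ≤
      (a + b) * binThc α (b / (a + b)) + a * alphaLog α a + b * alphaLog α b := by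
  have hα0 : α ≠ 0 := by linarith
  rcases a.eq_zero_or_pos with rfl | ha
  · rcases b.eq_zero_or_pos with rfl | hb
    · simp
    · simp [((Nat.cast_pos (α := ℝ)).2 hb).ne', binThc_one_right hα0]
  rcases b.eq_zero_or_pos with rfl | hb
  · simp [binThc_zero_right hα0]
  have ha' : (0 : ℝ) < a := Nat.cast_pos.2 ha
  have hb' : (0 : ℝ) < b := Nat.cast_pos.2 hb
  have hN : (0 : ℝ) < a + b := by positivity
  have weight_le (c : ℕ) (hc : 0 < c) (hcN : (c : ℝ) ≤ a + b) :
      (a + b) * ((c / (a + b)) ^ α * alphaLog α c) ≤ c * alphaLog α c := by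
    have hpow : (c / ((a : ℝ) + b)) ^ α ≤ c / (a + b) := by
      simpa using Real.rpow_le_rpow_of_exponent_ge (by positivity) ((div_le_one hN).2 hcN) hα
    calc (a + b) * ((c / (a + b)) ^ α * alphaLog α c)
        ≤ (a + b) * (c / (a + b) * alphaLog α c) := by
          gcongr
          exact alphaLog_nonneg α (Nat.one_le_cast.2 hc)
      _ = c * alphaLog α c := by field_simp
  rw [alphaLog_add α ha' hb', mul_add, mul_add]
  linarith [weight_le a ha (by linarith), weight_le b hb (by linarith)]

/-- Subadditivity of the THC entropy of the uniform distribution on `F` over the coordinates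
`j ∈ A`; multiplied by `#F` so that the empty family is no exception. -/
lemma card_mul_alphaLog_card_le {ι β : Type*} [DecidableEq β] {α : ℝ} (hα : 1 ≤ α)
    (X : ι → Finset β) (A : Finset β) (F : Finset ι) (hF : Set.InjOn (fun i => X i ∩ A) F) :
    (#F : ℝ) * alphaLog α #F ≤ ∑ j ∈ A, (#F : ℝ) * binThc α (#{i ∈ F | j ∈ X i} / #F) := by
  induction A using Finset.induction_on generalizing F with
  | empty =>
    have : #F ≤ 1 := card_le_one.2 fun i hi i' hi' => hF hi hi' (by simp)
    interval_cases #F <;> simp [alphaLog_one_right]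
  | insert a A ha ih =>
    set F₁ := {i ∈ F | a ∈ X i}
    set F₀ := {i ∈ F | a ∉ X i}
    have hcard : (#F : ℝ) = #F₀ + #F₁ := by
      rw [add_comm]; exact_mod_cast (card_filter_add_card_filter_not _).symm
    have hinj₁ : Set.InjOn (fun i => X i ∩ A) F₁ := fun i hi i' hi' h => by
      simp only [F₁, mem_coe, mem_filter] at hi hi'
      refine hF hi.1 hi'.1 ?_
      simp only [inter_insert_of_mem hi.2, inter_insert_of_mem hi'.2]
      exact congrArg (insert a) h
    have hinj₀ : Set.InjOn (fun i => X i ∩ A) F₀ := fun i hi i' hi' h => by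
      simp only [F₀, mem_coe, mem_filter] at hi hi'
      refine hF hi.1 hi'.1 ?_
      simpa only [inter_insert_of_notMem hi.2, inter_insert_of_notMem hi'.2] using h
    have hsplit (j : β) :
        (#{i ∈ F | j ∈ X i} : ℝ) = #{i ∈ F₀ | j ∈ X i} + #{i ∈ F₁ | j ∈ X i} := by
      have := card_filter_add_card_filter_not (s := {i ∈ F | j ∈ X i}) (a ∈ X ·)
      rw [filter_comm, filter_comm (fun i => j ∈ X i) (fun i => a ∉ X i)] at this
      rw [add_comm]
      exact_mod_cast this.symm
    calc (#F : ℝ) * alphaLog α #F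
        ≤ #F * binThc α (#F₁ / #F) + #F₀ * alphaLog α #F₀ + #F₁ * alphaLog α #F₁ := by
          simpa only [← hcard] using mul_alphaLog_add_le hα #F₀ #F₁
      _ ≤ #F * binThc α (#F₁ / #F) + ∑ j ∈ A, ((#F₀ : ℝ) * binThc α (#{i ∈ F₀ | j ∈ X i} / #F₀)
            + #F₁ * binThc α (#{i ∈ F₁ | j ∈ X i} / #F₁)) := by
          rw [sum_add_distrib]
          linarith [ih F₀ hinj₀, ih F₁ hinj₁]
      _ ≤ #F * binThc α (#F₁ / #F) + ∑ j ∈ A, (#F : ℝ) * binThc α (#{i ∈ F | j ∈ X i} / #F) := by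
          gcongr with j
          rw [hcard, hsplit j]
          exact (concaveOn_binThc hα).mul_div_add_mul_div_le (Nat.cast_nonneg _)
            (Nat.cast_le.2 (card_filter_le _ _)) (Nat.cast_nonneg _)
            (Nat.cast_le.2 (card_filter_le _ _))
      _ = ∑ j ∈ insert a A, (#F : ℝ) * binThc α (#{i ∈ F | j ∈ X i} / #F) := by
          rw [sum_insert ha]

/-- `x ^ 2 * B₂ x - 2 * x * B₁ x + 2 * B x` is `x ^ 3` times the second derivative of `B x / x`. -/
lemma concaveOn_div_self_of_hasDerivAt {r : ℝ} {B B₁ B₂ : ℝ → ℝ}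
    (hB : ∀ x ∈ Set.Ioc 0 r, HasDerivAt B (B₁ x) x)
    (hB₁ : ∀ x ∈ Set.Ioo 0 r, HasDerivAt B₁ (B₂ x) x)
    (hψ : ∀ x ∈ Set.Ioo 0 r, x ^ 2 * B₂ x - 2 * x * B₁ x + 2 * B x ≤ 0) :
    ConcaveOn ℝ (Set.Ioc 0 r) fun x => B x / x := by
  have hquot (x : ℝ) (hx : x ∈ Set.Ioc 0 r) :
      HasDerivAt (fun y => B y / y) ((x * B₁ x - B x) / x ^ 2) x :=
    ((hB x hx).fun_div (hasDerivAt_id' x) hx.1.ne').congr_deriv (by ring)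
  refine concaveOn_of_hasDerivWithinAt2_nonpos (convex_Ioc 0 r)
    (f' := fun x => (x * B₁ x - B x) / x ^ 2)
    (f'' := fun x => (x ^ 2 * B₂ x - 2 * x * B₁ x + 2 * B x) / x ^ 3)
    (fun x hx => (hquot x hx).continuousAt.continuousWithinAt) ?_ ?_ ?_ <;>
    rw [interior_Ioc] <;> intro x hx
  · exact (hquot x (Set.Ioo_subset_Ioc_self hx)).hasDerivWithinAt
  · have hnum : HasDerivAt (fun y => y * B₁ y - B y) (x * B₂ x) x :=
      (((hasDerivAt_id' x).fun_mul (hB₁ x hx)).fun_sub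
        (hB x (Set.Ioo_subset_Ioc_self hx))).congr_deriv (by ring)
    have hx0 : x ≠ 0 := hx.1.ne'
    refine ((hnum.fun_div (hasDerivAt_pow 2 x) (pow_ne_zero 2 hx0)).congr_deriv ?_).hasDerivWithinAt
    field_simp
    ring
  · exact div_nonpos_of_nonpos_of_nonneg (hψ x hx) (pow_pos hx.1 3).le

lemma concaveOn_comp_sq_div_self {r : ℝ} {H H₁ H₂ : ℝ → ℝ}
    (hH : ∀ u ∈ Set.Ioc 0 (r ^ 2), HasDerivAt H (H₁ u) u)
    (hH₁ : ∀ u ∈ Set.Ioo 0 (r ^ 2), HasDerivAt H₁ (H₂ u) u)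
    (hψ : ∀ u ∈ Set.Ioo 0 (r ^ 2), 2 * H u - 2 * u * H₁ u + 4 * u ^ 2 * H₂ u ≤ 0) :
    ConcaveOn ℝ (Set.Ioc 0 r) fun x => H (x ^ 2) / x := by
  have hsq_Ioc {x : ℝ} (hx : x ∈ Set.Ioc 0 r) : x ^ 2 ∈ Set.Ioc 0 (r ^ 2) :=
    ⟨by positivity [hx.1], pow_le_pow_left₀ hx.1.le hx.2 2⟩
  have hsq_Ioo {x : ℝ} (hx : x ∈ Set.Ioo 0 r) : x ^ 2 ∈ Set.Ioo 0 (r ^ 2) :=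
    ⟨by positivity [hx.1], pow_lt_pow_left₀ hx.2 hx.1.le two_ne_zero⟩
  have hsq (x : ℝ) : HasDerivAt (fun y : ℝ => y ^ 2) (2 * x) x := by
    simpa using hasDerivAt_pow 2 x
  refine concaveOn_div_self_of_hasDerivAt (B₁ := fun x => 2 * x * H₁ (x ^ 2))
    (B₂ := fun x => 2 * H₁ (x ^ 2) + 4 * x ^ 2 * H₂ (x ^ 2)) (fun x hx => ?_) (fun x hx => ?_)
    (fun x hx => ?_)
  · exact ((hH _ (hsq_Ioc hx)).comp (h := fun y => y ^ 2) x (hsq x)).congr_deriv (by ring)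
  · exact (((hasDerivAt_id' x).const_mul 2).fun_mul
      ((hH₁ _ (hsq_Ioo hx)).comp (h := fun y => y ^ 2) x (hsq x))).congr_deriv
      (by rw [Function.comp_apply]; ring)
  · linear_combination hψ _ (hsq_Ioo hx)

lemma one_sub_two_mul_le_one_sub_rpow {β u : ℝ} (hβ : 0 ≤ β) (hu₀ : 0 ≤ u) (hu : u ≤ 1 / 2) :
    1 - 2 * β * u ≤ (1 - u) ^ β := by
  have h1u : 0 < 1 - u := by linarith
  have hlog : -(2 * u) ≤ Real.log (1 - u) := by
    refine le_trans ?_ (Real.one_sub_inv_le_log_of_pos h1u)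
    rw [neg_le_sub_iff_le_add, inv_le_iff_one_le_mul₀ h1u]
    nlinarith
  rw [Real.rpow_def_of_pos h1u]
  nlinarith [Real.add_one_le_exp (Real.log (1 - u) * β)]

lemma one_le_one_sub_rpow_add {α u : ℝ} (hα₁ : 1 ≤ α) (hα₃ : α ≤ 3) (hu₀ : 0 ≤ u)
    (hu : u ≤ 1 / 2) : 1 ≤ (1 - u) ^ (α - 1) + 2 * (α - 1) * u * (1 - u) ^ (α - 2) := by
  have h1u : 0 < 1 - u := by linarith
  have hc : 0 ≤ 2 * (α - 1) * u := by positivity [sub_nonneg.2 hα₁]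
  rcases le_total α 2 with hα₂ | hα₂
  · have h1 := one_sub_two_mul_le_one_sub_rpow (sub_nonneg.2 hα₁) hu₀ hu
    have h2 : 1 ≤ (1 - u) ^ (α - 2) :=
      Real.one_le_rpow_of_pos_of_le_one_of_nonpos h1u (by linarith) (by linarith)
    nlinarith
  · have h1 : 1 - (α - 1) * u ≤ (1 - u) ^ (α - 1) := by
      have := one_add_mul_self_le_rpow_one_add (by linarith : -1 ≤ -u) (by linarith : 1 ≤ α - 1)
      rw [← sub_eq_add_neg] at this
      linarith
    have h2 : 1 - u ≤ (1 - u) ^ (α - 2) := by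
      simpa using Real.rpow_le_rpow_of_exponent_ge h1u (by linarith) (by linarith : α - 2 ≤ 1)
    nlinarith

lemma two_rpow_sub_two_le {α : ℝ} (hα : α ≤ 3.67) : (2 : ℝ) ^ (α - 2) ≤ 11 / 3 := by
  have hpow : ((2 : ℝ) ^ ((7 : ℝ) / 4)) ^ 4 = 2 ^ 7 := by
    rw [← Real.rpow_natCast, ← Real.rpow_mul (by norm_num)]
    norm_num
  calc (2 : ℝ) ^ (α - 2) ≤ 2 ^ ((7 : ℝ) / 4) :=
        Real.rpow_le_rpow_of_exponent_le (by norm_num) (by norm_num at hα ⊢; linarith)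
    _ ≤ 11 / 3 := le_of_pow_le_pow_left₀ (n := 4) (by norm_num) (by norm_num) (by norm_num [hpow])

lemma le_mul_rpow_add_mul_one_sub_rpow {α u : ℝ} (hα₃ : 3 ≤ α) (hα : α ≤ 3.67) (hu₀ : 0 ≤ u)
    (hu : u ≤ 1 / 2) : α ≤ (2 * α - 1) * u ^ (α - 2) + 2 * α * (1 - u) ^ (α - 2) := by
  have hconv := (convexOn_rpow (by linarith : 1 ≤ α - 2)).2 (Set.mem_Ici.2 hu₀)
    (Set.mem_Ici.2 (by linarith : 0 ≤ 1 - u)) (by norm_num : (0 : ℝ) ≤ 1 / 2)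
    (by norm_num : (0 : ℝ) ≤ 1 / 2) (by norm_num)
  simp only [smul_eq_mul, show 1 / 2 * u + 1 / 2 * (1 - u) = (1 / 2 : ℝ) by ring] at hconv
  have hmono : (1 / 2 : ℝ) ^ (α - 2) ≤ (1 - u) ^ (α - 2) :=
    Real.rpow_le_rpow (by norm_num) (by linarith) (by linarith)
  have hhalf : α ≤ (4 * α - 1) * (1 / 2 : ℝ) ^ (α - 2) := by
    have h2 : 0 < (2 : ℝ) ^ (α - 2) := by positivity
    rw [Real.div_rpow zero_le_one zero_le_two, Real.one_rpow, mul_one_div, le_div_iff₀ h2]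
    nlinarith [two_rpow_sub_two_le hα]
  nlinarith

/-- The right side minus `2` is `1 - α` times `2 h_α - 2 u h_α' + 4 u² h_α''` at `u`, the factor
that `concaveOn_comp_sq_div_self` asks to be nonpositive for `H = h_α`. -/
lemma two_le_deriv2_numerator {α u : ℝ} (hα₁ : 1 ≤ α) (hα : α ≤ 3.67) (hu₀ : 0 < u)
    (hu : u ≤ 1 / 2) :
    2 ≤ (4 * α ^ 2 - 6 * α + 2) * u ^ α + 2 * α * u * (1 - u) ^ (α - 1)
      + 4 * α * (α - 1) * u ^ 2 * (1 - u) ^ (α - 2) + 2 * (1 - u) ^ α := by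
  have hbern : 1 - α * u ≤ (1 - u) ^ α := by
    have := one_add_mul_self_le_rpow_one_add (by linarith : -1 ≤ -u) hα₁
    rw [← sub_eq_add_neg] at this
    linarith
  rcases le_total α 3 with hα₃ | hα₃
  · have h := mul_le_mul_of_nonneg_left (one_le_one_sub_rpow_add hα₁ hα₃ hu₀.le hu)
      (by positivity : 0 ≤ 2 * α * u)
    have hcoef : 0 ≤ 4 * α ^ 2 - 6 * α + 2 := by nlinarith
    have : 0 ≤ (4 * α ^ 2 - 6 * α + 2) * u ^ α := mul_nonneg hcoef (by positivity)
    linarith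
  · have h1 : 1 - (α - 1) * u ≤ (1 - u) ^ (α - 1) := by
      have := one_add_mul_self_le_rpow_one_add (by linarith : -1 ≤ -u) (by linarith : 1 ≤ α - 1)
      rw [← sub_eq_add_neg] at this
      linarith
    have h2 := le_mul_rpow_add_mul_one_sub_rpow hα₃ hα hu₀.le hu
    have hsplit : u ^ α = u ^ 2 * u ^ (α - 2) := by
      rw [← Real.rpow_natCast, ← Real.rpow_add hu₀]
      norm_num
    have h1' := mul_le_mul_of_nonneg_left h1 (by positivity : 0 ≤ 2 * α * u)
    have h2' := mul_le_mul_of_nonneg_left h2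
      (by positivity [sub_nonneg.2 hα₁] : 0 ≤ 2 * (α - 1) * u ^ 2)
    rw [hsplit]
    linarith

lemma one_div_sqrt_two_sq : (1 / √2 : ℝ) ^ 2 = 1 / 2 := by
  rw [div_pow, Real.sq_sqrt zero_le_two, one_pow]

lemma concaveOn_binEntropy_sq_div :
    ConcaveOn ℝ (Set.Ioc 0 (1 / √2)) fun x => Real.binEntropy (x ^ 2) / x := by
  refine concaveOn_comp_sq_div_self (H₁ := fun u => Real.log (1 - u) - Real.log u)
    (H₂ := fun u => -1 / (1 - u) - u⁻¹) ?_ ?_ ?_ <;> rw [one_div_sqrt_two_sq] <;> intro u hu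
  · exact Real.hasDerivAt_binEntropy hu.1.ne' (by linarith [hu.2])
  · have h1u : 1 - u ≠ 0 := by linarith [hu.2]
    exact (((hasDerivAt_id' u).const_sub 1).log h1u).sub (Real.hasDerivAt_log hu.1.ne')
  · have h1u : 0 < 1 - u := by linarith [hu.2]
    have hlog := Real.one_sub_inv_le_log_of_pos h1u
    have hfrac : (1 - u)⁻¹ - 1 = u / (1 - u) := by field_simp; ring
    have hpos : 0 ≤ u / (1 - u) := div_nonneg hu.1.le h1u.le
    have hsimp : 2 * Real.binEntropy u - 2 * u * (Real.log (1 - u) - Real.log u)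
        + 4 * u ^ 2 * (-1 / (1 - u) - u⁻¹) = -2 * Real.log (1 - u) - 4 * (u / (1 - u)) := by
      have := hu.1.ne'
      rw [Real.binEntropy, Real.log_inv, Real.log_inv]
      field_simp
      ring
    linarith

lemma concaveOn_binThc_sq_div_of_one_lt {α : ℝ} (hα₁ : 1 < α) (hα : α ≤ 3.67) :
    ConcaveOn ℝ (Set.Ioc 0 (1 / √2)) fun x => binThc α (x ^ 2) / x := by
  have hα' : 1 - α < 0 := by linarith
  refine concaveOn_comp_sq_div_self
    (H₁ := fun u => α * (u ^ (α - 1) - (1 - u) ^ (α - 1)) / (1 - α))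
    (H₂ := fun u => -α * (u ^ (α - 2) + (1 - u) ^ (α - 2))) ?_ ?_ ?_ <;>
    rw [one_div_sqrt_two_sq] <;> intro u hu
  · have h1u : 1 - u ≠ 0 := by linarith [hu.2]
    rw [show binThc α = fun u => (u ^ α + (1 - u) ^ α - 1) / (1 - α) from
      funext (binThc_of_ne_one hα₁.ne')]
    refine ((((Real.hasDerivAt_rpow_const (Or.inl hu.1.ne')).add
      (((hasDerivAt_id' u).const_sub 1).rpow_const (Or.inl h1u))).sub_const 1).div_const
      (1 - α)).congr_deriv ?_
    ring
  · have h1u : 1 - u ≠ 0 := by linarith [hu.2]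
    refine ((((Real.hasDerivAt_rpow_const (Or.inl hu.1.ne')).sub
      (((hasDerivAt_id' u).const_sub 1).rpow_const (Or.inl h1u))).const_mul α).div_const
      (1 - α)).congr_deriv ?_
    rw [sub_sub, one_add_one_eq_two]
    have := hα'.ne
    field_simp
    ring
  · have hu₀ := hu.1
    have h1u : 0 < 1 - u := by linarith [hu.2]
    have hψ := two_le_deriv2_numerator hα₁.le hα hu₀ hu.2.le
    simp only [binThc_of_ne_one hα₁.ne', Real.rpow_sub_one hu₀.ne', Real.rpow_sub_one h1u.ne',
      Real.rpow_sub hu₀, Real.rpow_sub h1u, Real.rpow_two] at hψ ⊢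
    have hα0 := hα'.ne
    have hu0 := hu₀.ne'
    have h1u0 := h1u.ne'
    calc _ = ((4 * α ^ 2 - 6 * α + 2) * u ^ α + 2 * α * u * ((1 - u) ^ α / (1 - u))
          + 4 * α * (α - 1) * u ^ 2 * ((1 - u) ^ α / (1 - u) ^ 2) + 2 * (1 - u) ^ α - 2)
          / (1 - α) := by
          field_simp
          ring
      _ ≤ 0 := div_nonpos_of_nonneg_of_nonpos (by linarith) hα'.le

lemma concaveOn_binThc_sq_div {α : ℝ} (hα : α ∈ Set.Icc 1 3.67) :
    ConcaveOn ℝ (Set.Ioc 0 (1 / √2)) fun x => binThc α (x ^ 2) / x := by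
  rcases hα.1.eq_or_lt with rfl | hα₁
  · simpa only [binThc_one_left] using concaveOn_binEntropy_sq_div
  · exact concaveOn_binThc_sq_div_of_one_lt hα₁ hα.2

lemma sum_le_mul_of_concaveOn_div_self {ι : Type*} {s : Set ℝ} {f : ℝ → ℝ}
    (hf : ConcaveOn ℝ s fun x => f x / x) (hf₀ : f 0 = 0) (t : Finset ι) (x : ι → ℝ)
    (hx₀ : ∀ i ∈ t, 0 ≤ x i) (hxs : ∀ i ∈ t, x i ≠ 0 → x i ∈ s) (hS : 0 < ∑ i ∈ t, x i) :
    ∑ i ∈ t, f (x i) ≤ (∑ i ∈ t, x i) *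
      (f ((∑ i ∈ t, x i ^ 2) / ∑ i ∈ t, x i) / ((∑ i ∈ t, x i ^ 2) / ∑ i ∈ t, x i)) := by
  set S := ∑ i ∈ t, x i
  set T := {i ∈ t | x i ≠ 0}
  have hT (g : ι → ℝ) (hg : ∀ i ∈ t, x i = 0 → g i = 0) : ∑ i ∈ T, g i = ∑ i ∈ t, g i :=
    sum_filter_of_ne fun i hi hgi => fun hxi => hgi (hg i hi hxi)
  have hjensen := hf.le_map_sum (t := T) (w := fun i => x i / S) (p := x)
    (fun i hi => div_nonneg (hx₀ i (mem_filter.1 hi).1) hS.le)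
    (by rw [← sum_div, hT x fun _ _ h => h, div_self hS.ne'])
    (fun i hi => hxs i (mem_filter.1 hi).1 (mem_filter.1 hi).2)
  simp only [smul_eq_mul] at hjensen
  have hlhs : ∑ i ∈ T, x i / S * (f (x i) / x i) = (∑ i ∈ t, f (x i)) / S := by
    rw [← hT (fun i => f (x i)) fun _ _ h => by simp [h, hf₀], sum_div]
    refine sum_congr rfl fun i hi => ?_
    have := (mem_filter.1 hi).2
    field_simp
  have hrhs : ∑ i ∈ T, x i / S * x i = (∑ i ∈ t, x i ^ 2) / S := by
    rw [← hT (fun i => x i ^ 2) fun _ _ h => by simp [h], sum_div]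
    exact sum_congr rfl fun i _ => by ring
  rw [hlhs, hrhs, div_le_iff₀ hS] at hjensen
  linarith

lemma choose_two_div_choose_two_le_sq {d m : ℕ} (hdm : d ≤ m) :
    ((d.choose 2 : ℕ) : ℝ) / (m.choose 2 : ℕ) ≤ ((d : ℝ) / m) ^ 2 := by
  rcases lt_or_ge m 2 with hm | hm
  · rw [Nat.choose_eq_zero_of_lt hm, Nat.cast_zero, div_zero]
    positivity
  have hm' : (2 : ℝ) ≤ m := by exact_mod_cast hm
  have hdm' : (d : ℝ) ≤ m := by exact_mod_cast hdm
  rw [Nat.cast_choose_two, Nat.cast_choose_two, div_pow,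
    div_le_div_iff₀ (by nlinarith) (by positivity)]
  nlinarith [mul_nonneg (mul_nonneg (Nat.cast_nonneg d) (by linarith : (0 : ℝ) ≤ m))
    (sub_nonneg.2 hdm')]

section Pairs

variable {ι β : Type*} [Fintype β] [DecidableEq β]

lemma filter_powersetCard_mem_inf (n : ℕ) (s : Finset ι) (X : ι → Finset β) (j : β) :
    {e ∈ powersetCard n s | j ∈ e.inf X} = powersetCard n {i ∈ s | j ∈ X i} := by
  have hmem (e : Finset ι) : j ∈ e.inf X ↔ ∀ i ∈ e, j ∈ X i := by
    simpa only [singleton_subset_iff] using Finset.le_inf_iff (a := {j}) (s := e) (f := X)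
  ext e
  simp only [mem_filter, mem_powersetCard, hmem, subset_iff]
  grind

lemma injOn_inf_powersetCard_two [Fintype ι] [DecidableEq ι] {X : ι → Finset β}
    (hX : ∀ i j s t, i ≠ j → s ≠ t → ({i, j} : Finset ι) ≠ {s, t} → X i ∩ X j ≠ X s ∩ X t) :
    Set.InjOn (fun e : Finset ι => e.inf X) ↑(powersetCard 2 (univ : Finset ι)) := by
  intro e he e' he' h
  obtain ⟨i, j, hij, rfl⟩ := card_eq_two.1 (mem_powersetCard.1 he).2
  obtain ⟨s, t, hst, rfl⟩ := card_eq_two.1 (mem_powersetCard.1 he').2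
  by_contra hne
  exact hX i j s t hij hst hne (by simpa [inf_insert] using h)

lemma alphaLog_choose_two_le_sum_binThc [Fintype ι] {α : ℝ} (hα : 1 ≤ α) (X : ι → Finset β)
    (hX : Set.InjOn (fun e : Finset ι => e.inf X) ↑(powersetCard 2 (univ : Finset ι)))
    (hι : 2 ≤ Fintype.card ι) :
    alphaLog α ((Fintype.card ι).choose 2 : ℕ) ≤
      ∑ j, binThc α (((#{i | j ∈ X i}).choose 2 : ℕ) / ((Fintype.card ι).choose 2 : ℕ)) := by
  have hcount := card_mul_alphaLog_card_le hα (fun e : Finset ι => e.inf X) univ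
    (powersetCard 2 univ) (by simpa only [inter_univ] using hX)
  simp only [filter_powersetCard_mem_inf, card_powersetCard, card_univ, ← mul_sum] at hcount
  exact le_of_mul_le_mul_left hcount (by exact_mod_cast Nat.choose_pos hι)

end Pairs

lemma sum_card_filter_mem_eq_sum_card {ι β : Type*} [Fintype ι] [Fintype β] [DecidableEq β]
    (X : ι → Finset β) : ∑ j, #{i | j ∈ X i} = ∑ i, #(X i) := by
  simpa [bipartiteAbove, bipartiteBelow] using
    sum_card_bipartiteAbove_eq_sum_card_bipartiteBelow (s := univ) (t := univ)
      (r := fun j i => j ∈ X i)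

theorem alphaLog_choose_le_general (n m k : ℕ) (hm : 2 ≤ m) (hk : 1 ≤ k)
    (G : Fin m → Finset (Fin n))
    (hGcard : ∀ i, (G i).card = k)
    (hint : ∀ i j s t : Fin m, i ≠ j → s ≠ t →
      ({i, j} : Finset (Fin m)) ≠ ({s, t} : Finset (Fin m)) →
      G i ∩ G j ≠ G s ∩ G t)
    (lamj : Fin n → ℝ)
    (hlamj : ∀ j, lamj j = ((Finset.univ.filter (fun i => j ∈ G i)).card : ℝ) / (m : ℝ))
    (lam : ℝ) (hlam : lam = ∑ j, (lamj j) ^ 2 / (k : ℝ))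
    (hhalf : ∀ j, lamj j ≤ 1 / Real.sqrt 2)
    (α : ℝ) (hα : α ∈ Set.Icc (1 : ℝ) 3.67) :
    alphaLog α ((m.choose 2 : ℕ) : ℝ) ≤ (k : ℝ) * (binThc α (lam ^ 2) / lam) := by
  have hm₀ : (0 : ℝ) < m := by positivity
  have hlamj₀ (j : Fin n) : 0 ≤ lamj j := by rw [hlamj]; positivity
  have hsum : ∑ j, lamj j = k := by
    simp_rw [hlamj, ← sum_div]
    rw [div_eq_iff hm₀.ne']
    exact_mod_cast (sum_card_filter_mem_eq_sum_card G).trans (by simp [hGcard, mul_comm])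
  calc alphaLog α ((m.choose 2 : ℕ) : ℝ)
      ≤ ∑ j, binThc α (((#{i | j ∈ G i}).choose 2 : ℕ) / (m.choose 2 : ℕ)) := by
        simpa using alphaLog_choose_two_le_sum_binThc hα.1 G (injOn_inf_powersetCard_two hint)
          (by simpa using hm)
    _ ≤ ∑ j, binThc α (lamj j ^ 2) := by
        refine sum_le_sum fun j _ => ?_
        have hsq : lamj j ^ 2 ≤ 1 / 2 :=
          one_div_sqrt_two_sq ▸ pow_le_pow_left₀ (hlamj₀ j) (hhalf j) 2
        have hratio : (((#{i | j ∈ G i}).choose 2 : ℕ) : ℝ) / (m.choose 2 : ℕ) ≤ lamj j ^ 2 := by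
          rw [hlamj]
          exact choose_two_div_choose_two_le_sq ((card_filter_le _ _).trans (by simp))
        exact monotoneOn_binThc hα.1 ⟨by positivity, hratio.trans hsq⟩ ⟨sq_nonneg _, hsq⟩ hratio
    _ ≤ k * (binThc α (lam ^ 2) / lam) := by
        have := sum_le_mul_of_concaveOn_div_self (f := fun x => binThc α (x ^ 2))
          (concaveOn_binThc_sq_div hα) (by simp [binThc_zero_right (by linarith [hα.1] : α ≠ 0)])
          univ lamj (fun j _ => hlamj₀ j) (fun j _ hj => ⟨(hlamj₀ j).lt_of_ne' hj, hhalf j⟩)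
          (by rw [hsum]; exact_mod_cast hk)
        rwa [hsum, sum_div, ← hlam] at this

/-- Let `G₁, …, G_m` (`m ≥ 2`) be distinct `k`-element subsets
(`k ≥ 1`) of `{1, …, n}` such that no two pairwise intersections coincide.  Let `λ j` be
the proportion of members containing `j` and `λ = Σ_j (λ j)²/k`.  If `λ j ≤ 1/√2` for all
`j`, then for every `α ∈ [1, 3.67]`:  `ln_α (binom m 2) ≤ k · h_α(λ²)/λ`. -/
theorem alphaLog_choose_le (n m k : ℕ) (hm : 2 ≤ m) (hk : 1 ≤ k)
    (G : Fin m → Finset (Fin n)) (hGinj : Function.Injective G)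
    (hGcard : ∀ i, (G i).card = k)
    (hint : ∀ i j s t : Fin m, i ≠ j → s ≠ t →
      ({i, j} : Finset (Fin m)) ≠ ({s, t} : Finset (Fin m)) →
      G i ∩ G j ≠ G s ∩ G t)
    (lamj : Fin n → ℝ)
    (hlamj : ∀ j, lamj j = ((Finset.univ.filter (fun i => j ∈ G i)).card : ℝ) / (m : ℝ))
    (lam : ℝ) (hlam : lam = ∑ j, (lamj j) ^ 2 / (k : ℝ))
    (hhalf : ∀ j, lamj j ≤ 1 / Real.sqrt 2)
    (α : ℝ) (hα : α ∈ Set.Icc (1 : ℝ) 3.67) :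
    alphaLog α ((m.choose 2 : ℕ) : ℝ) ≤ (k : ℝ) * (binThc α (lam ^ 2) / lam) :=
  alphaLog_choose_le_general n m k hm hk G hGcard hint lamj hlamj lam hlam hhalf α hα
end

section
/- (THC-entropy Shearer lemma) Let X = (X₁, …, X_n) be a random variable taking values in the product set S = S₁ × ⋯ × S_n of finite sets, where each coordinate X_j takes values in S_j; for a subset I ⊆ {1, …, n} let X(I) denote the random variable (X_j)_{j∈I}. Suppose 𝓖 is a family of subsets of {1, …, n} such that each j ∈ {1, …, n} belongs to at least k members of 𝓖. Then for every α ≥ 1: k · H_α(X) ≤ Σ_{G∈𝓖} H_α(X(G)). -/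
/-!
For `α ≥ 1` the set function `f T = H_α(X(T))` vanishes at `∅`, is monotone and is submodular.
Submodularity is the strong subadditivity `H(Y,Z,W) + H(W) ≤ H(Y,W) + H(Z,W)`: by the chain rule
`H(Y,V) = H(V) + H(Y|V)` for Daróczy's conditional entropy it says that conditioning on more
cannot increase `H(Y|·)`, which follows from the concavity of `H_α` on distributions.
Shearer's inequality holds for every such set function: order the coordinates, let `D j` be the
increment of `f` when `j` is added to the coordinates below it, so that `Σ_j D j = f univ`;
submodularity gives `Σ_{j ∈ G} D j ≤ f G`, and every `D j ≥ 0` is counted at least `k` times.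
-/

open Finset

noncomputable def thcTerm (α x : ℝ) : ℝ :=
  if α = 1 then Real.negMulLog x else (x - x ^ α) / (α - 1)

section thcTerm

variable {α : ℝ}

lemma thcTerm_zero (hα : α ≠ 0) : thcTerm α 0 = 0 := by
  by_cases h : α = 1 <;> simp [thcTerm, h, Real.zero_rpow hα]

lemma thcTerm_nonneg (hα : 1 ≤ α) {x : ℝ} (hx₀ : 0 ≤ x) (hx₁ : x ≤ 1) : 0 ≤ thcTerm α x := by
  unfold thcTerm
  split_ifs with h
  · exact Real.negMulLog_nonneg hx₀ hx₁
  · have : 0 < α - 1 := sub_pos.2 (lt_of_le_of_ne hα (Ne.symm h))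
    exact div_nonneg (sub_nonneg.2 (Real.rpow_le_self_of_le_one hx₀ hx₁ hα)) this.le

lemma concaveOn_thcTerm (hα : 1 ≤ α) : ConcaveOn ℝ (Set.Ici 0) (thcTerm α) := by
  by_cases h : α = 1
  · have heq : thcTerm α = Real.negMulLog := by funext x; simp [thcTerm, h]
    exact heq ▸ Real.concaveOn_negMulLog
  · have : 0 ≤ (α - 1)⁻¹ := inv_nonneg.2 (sub_nonneg.2 hα)
    have heq : thcTerm α = fun x => (α - 1)⁻¹ • (x - x ^ α) := by
      funext x; simp [thcTerm, h, div_eq_inv_mul]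
    rw [heq]
    exact ((concaveOn_id (convex_Ici 0)).sub (convexOn_rpow hα)).smul this

lemma rpow_mul_thcTerm_div {t x : ℝ} (ht : 0 < t) (hx : 0 ≤ x) :
    t ^ α * thcTerm α (x / t) = thcTerm α x - x / t * thcTerm α t := by
  unfold thcTerm
  split_ifs with h
  · subst h
    rcases hx.eq_or_lt with rfl | hx
    · simp
    · simp only [Real.rpow_one, Real.negMulLog, Real.log_div hx.ne' ht.ne']
      field_simp
      ring
  · have h' : α - 1 ≠ 0 := sub_ne_zero.2 h
    rw [Real.div_rpow hx ht.le]
    field_simp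
    ring

lemma thc_eq_sum_thcTerm {A : Type*} [Fintype A] (p : A → ℝ) (hp : ∑ a, p a = 1) :
    thc α p = ∑ a, thcTerm α (p a) := by
  unfold thc thcTerm
  split_ifs with h
  · simp [Real.negMulLog, Finset.sum_neg_distrib]
  · have h' : α - 1 ≠ 0 := sub_ne_zero.2 h
    have h'' : 1 - α ≠ 0 := sub_ne_zero.2 (Ne.symm h)
    rw [← Finset.sum_div, Finset.sum_sub_distrib, hp]
    field_simp
    ring

end thcTerm

section thc

variable {α : ℝ} {A B ι : Type*} [Fintype A] [Fintype B] [Fintype ι]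

lemma thc_nonneg (hα : 1 ≤ α) {p : A → ℝ} (hp : ∀ a, 0 ≤ p a) (hp1 : ∑ a, p a ≤ 1) :
    0 ≤ thc α p := by
  have hle : ∀ a, p a ≤ 1 := fun a =>
    (Finset.single_le_sum (fun b _ => hp b) (mem_univ a)).trans hp1
  unfold thc
  split_ifs with h
  · simpa [Real.negMulLog] using Finset.sum_nonneg fun a _ => Real.negMulLog_nonneg (hp a) (hle a)
  · have hpow : ∑ a, p a ^ α ≤ 1 :=
      (Finset.sum_le_sum fun a _ => Real.rpow_le_self_of_le_one (hp a) (hle a) hα).trans hp1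
    exact div_nonneg_of_nonpos (by linarith) (by linarith [lt_of_le_of_ne hα (Ne.symm h)])

lemma thc_div_sum_nonneg (hα : 1 ≤ α) {q : A → ℝ} (hq : ∀ a, 0 ≤ q a) :
    0 ≤ thc α (fun a => q a / ∑ a', q a') :=
  thc_nonneg hα (fun a => div_nonneg (hq a) (Finset.sum_nonneg fun a _ => hq a))
    (by rw [← Finset.sum_div]; exact div_self_le_one _)

lemma sum_mul_thc_le_thc_sum (hα : 1 ≤ α) {w : ι → ℝ} {q : ι → A → ℝ} (hw : ∀ i, 0 ≤ w i)
    (hw1 : ∑ i, w i = 1) (hq : ∀ i a, 0 ≤ q i a) (hq1 : ∀ i, w i ≠ 0 → ∑ a, q i a = 1) :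
    ∑ i, w i * thc α (q i) ≤ thc α (fun a => ∑ i, w i * q i a) := by
  have hterm : ∀ i, w i * thc α (q i) = ∑ a, w i * thcTerm α (q i a) := by
    intro i
    by_cases hi : w i = 0
    · simp [hi]
    · rw [thc_eq_sum_thcTerm _ (hq1 i hi), Finset.mul_sum]
  have hmix : ∑ a, ∑ i, w i * q i a = 1 := by
    rw [Finset.sum_comm, ← hw1]
    refine Finset.sum_congr rfl fun i _ => ?_
    by_cases hi : w i = 0
    · simp [hi]
    · rw [← Finset.mul_sum, hq1 i hi, mul_one]
  rw [Finset.sum_congr rfl fun i _ => hterm i, Finset.sum_comm, thc_eq_sum_thcTerm _ hmix]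
  gcongr with a
  simpa using (concaveOn_thcTerm hα).le_map_sum (t := univ) (fun i _ => hw i) hw1
    (fun i _ => Set.mem_Ici.2 (hq i a))

lemma rpow_mul_thc_div_sum (hα : α ≠ 0) {q : A → ℝ} (hq : ∀ a, 0 ≤ q a) :
    (∑ a, q a) ^ α * thc α (fun a => q a / ∑ a', q a') =
      ∑ a, thcTerm α (q a) - thcTerm α (∑ a, q a) := by
  rcases (Finset.sum_nonneg fun a _ => hq a).eq_or_lt with ht | ht
  · have hzero : ∀ a, q a = 0 := fun a =>
      (Finset.sum_eq_zero_iff_of_nonneg fun b _ => hq b).1 ht.symm a (mem_univ a)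
    simp [hzero, Real.zero_rpow hα, thcTerm_zero hα]
  · rw [thc_eq_sum_thcTerm _ (by rw [← Finset.sum_div, div_self ht.ne']), Finset.mul_sum,
      Finset.sum_congr rfl fun a _ => rpow_mul_thcTerm_div ht (hq a), Finset.sum_sub_distrib,
      ← Finset.sum_mul, ← Finset.sum_div, div_self ht.ne', one_mul]

lemma condThc1_eq_sum_sub (hα : α ≠ 0) {p : A × B → ℝ} (hp : ∀ x, 0 ≤ p x) :
    condThc1 α p = ∑ b, (∑ a, thcTerm α (p (a, b)) - thcTerm α (∑ a, p (a, b))) :=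
  Finset.sum_congr rfl fun b _ => rpow_mul_thc_div_sum hα fun a => hp (a, b)

lemma thc_eq_thc_add_condThc1 (hα : α ≠ 0) {p : A × B → ℝ} (hp : ∀ x, 0 ≤ p x)
    (hp1 : ∑ x, p x = 1) : thc α p = thc α (fun b => ∑ a, p (a, b)) + condThc1 α p := by
  have hmarg : ∑ b, ∑ a, p (a, b) = 1 := by rwa [Fintype.sum_prod_type_right] at hp1
  rw [condThc1_eq_sum_sub hα hp, thc_eq_sum_thcTerm _ hp1, thc_eq_sum_thcTerm _ hmarg,
    Fintype.sum_prod_type_right, Finset.sum_sub_distrib]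
  ring

lemma condThc1_nonneg (hα : 1 ≤ α) {p : A × B → ℝ} (hp : ∀ x, 0 ≤ p x) : 0 ≤ condThc1 α p :=
  Finset.sum_nonneg fun b _ => mul_nonneg
    (Real.rpow_nonneg (Finset.sum_nonneg fun a _ => hp (a, b)) α)
    (thc_div_sum_nonneg hα fun a => hp (a, b))

end thc

section conditioning

variable {α : ℝ} {A B C : Type*} [Fintype A] [Fintype B] [Fintype C]

lemma rpow_le_rpow_mul_div (hα : 1 ≤ α) {r t : ℝ} (hr : 0 ≤ r) (hrt : r ≤ t) (ht : 0 < t) :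
    r ^ α ≤ t ^ α * (r / t) := by
  have := Real.rpow_le_self_of_le_one (div_nonneg hr ht.le) (div_le_one_of_le₀ hrt ht.le) hα
  rwa [Real.div_rpow hr ht.le, div_le_iff₀ (Real.rpow_pos_of_pos ht α), mul_comm] at this

-- Besides concavity of `H_α`, this uses `(p(b) / t) ^ α ≤ p(b) / t`, where `α ≥ 1` is essential.
lemma condThc1_le_rpow_mul_thc (hα : 1 ≤ α) {p : A × B → ℝ} (hp : ∀ x, 0 ≤ p x) :
    condThc1 α p ≤
      (∑ a, ∑ b, p (a, b)) ^ α * thc α (fun a => (∑ b, p (a, b)) / ∑ a', ∑ b, p (a', b)) := by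
  set t := ∑ a, ∑ b, p (a, b)
  have hR : ∀ b, 0 ≤ ∑ a, p (a, b) := fun b => Finset.sum_nonneg fun a _ => hp (a, b)
  have ht_comm : t = ∑ b, ∑ a, p (a, b) := Finset.sum_comm
  have hzero_of : ∀ b, ∑ a, p (a, b) = 0 → ∀ a, p (a, b) = 0 := fun b hb a =>
    (Finset.sum_eq_zero_iff_of_nonneg fun a _ => hp (a, b)).1 hb a (mem_univ a)
  rcases (ht_comm ▸ Finset.sum_nonneg fun b _ => hR b : 0 ≤ t).eq_or_lt with ht | ht
  · have hzero : ∀ b a, p (a, b) = 0 := fun b => hzero_of b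
      ((Finset.sum_eq_zero_iff_of_nonneg fun b _ => hR b).1 (ht_comm ▸ ht.symm) b (mem_univ b))
    simp [condThc1, hzero, ← ht, Real.zero_rpow (by linarith : α ≠ 0)]
  have hRt : ∀ b, ∑ a, p (a, b) ≤ t := fun b =>
    ht_comm ▸ Finset.single_le_sum (fun b _ => hR b) (mem_univ b)
  have hw1 : ∑ b, (∑ a, p (a, b)) / t = 1 := by
    rw [← Finset.sum_div, ← ht_comm, div_self ht.ne']
  calc condThc1 α p
      = ∑ b, (∑ a, p (a, b)) ^ α * thc α (fun a => p (a, b) / ∑ a', p (a', b)) := rfl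
    _ ≤ ∑ b, t ^ α * ((∑ a, p (a, b)) / t * thc α (fun a => p (a, b) / ∑ a', p (a', b))) :=
      Finset.sum_le_sum fun b _ => by
        rw [← mul_assoc]
        exact mul_le_mul_of_nonneg_right (rpow_le_rpow_mul_div hα (hR b) (hRt b) ht)
          (thc_div_sum_nonneg hα fun a => hp (a, b))
    _ = t ^ α * ∑ b, (∑ a, p (a, b)) / t * thc α (fun a => p (a, b) / ∑ a', p (a', b)) := by
      rw [Finset.mul_sum]
    _ ≤ t ^ α * thc α (fun a => ∑ b, (∑ a, p (a, b)) / t * (p (a, b) / ∑ a', p (a', b))) := by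
      gcongr
      refine sum_mul_thc_le_thc_sum hα (fun b => div_nonneg (hR b) ht.le) hw1
        (fun b a => div_nonneg (hp (a, b)) (hR b)) fun b hb => ?_
      rw [← Finset.sum_div, div_self (div_ne_zero_iff.1 hb).1]
    _ = t ^ α * thc α (fun a => (∑ b, p (a, b)) / t) := by
      congr 2
      funext a
      rw [Finset.sum_div]
      refine Finset.sum_congr rfl fun b _ => ?_
      rcases (hR b).eq_or_lt with hb | hb
      · simp [hzero_of b hb.symm a]
      · field_simp

lemma condThc1_le_condThc1_marginal (hα : 1 ≤ α) {p : A × (B × C) → ℝ} (hp : ∀ x, 0 ≤ p x) :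
    condThc1 α p ≤ condThc1 α (fun ac : A × C => ∑ b, p (ac.1, (b, ac.2))) := by
  rw [condThc1, Fintype.sum_prod_type_right]
  exact Finset.sum_le_sum fun c _ =>
    condThc1_le_rpow_mul_thc hα (p := fun ab => p (ab.1, (ab.2, c))) fun x => hp _

end conditioning

section distOf

variable {Ω A B C : Type*} [Fintype Ω] [DecidableEq A] [DecidableEq B] [DecidableEq C]
  {μ : Ω → ℝ} {α : ℝ}

lemma distOf_nonneg_s11 (hμ : ∀ ω, 0 ≤ μ ω) (V : Ω → A) (a : A) : 0 ≤ distOf μ V a :=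
  Finset.sum_nonneg fun ω _ => hμ ω

lemma sum_distOf [Fintype A] (V : Ω → A) : ∑ a, distOf μ V a = ∑ ω, μ ω :=
  Finset.sum_fiberwise_of_maps_to (fun ω _ => mem_univ (V ω)) μ

lemma distOf_congr {V : Ω → A} {V' : Ω → B} {a : A} {b : B} (h : ∀ ω, V ω = a ↔ V' ω = b) :
    distOf μ V a = distOf μ V' b := by
  unfold distOf
  congr 1
  ext ω
  simp [h ω]

lemma sum_distOf_pair [Fintype A] (Y : Ω → A) (Z : Ω → B) (b : B) :
    ∑ a, distOf μ (fun ω => (Y ω, Z ω)) (a, b) = distOf μ Z b := by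
  unfold distOf
  rw [← Finset.sum_fiberwise_of_maps_to (g := Y) (t := univ) (fun ω _ => mem_univ _)]
  refine Finset.sum_congr rfl fun a _ => ?_
  rw [Finset.filter_filter]
  congr 1
  ext ω
  simp [Prod.ext_iff, and_comm]

-- Each value of `V` is counted once, spread evenly over the sample points of its fibre.
lemma sum_distOf_eq_sum_fiber [Fintype A] {h : ℝ → ℝ} (h0 : h 0 = 0) (V : Ω → A) :
    ∑ a, h (distOf μ V a) =
      ∑ ω, h (distOf μ V (V ω)) / #{ω' | V ω' = V ω} := by
  rw [← Finset.sum_subset (subset_univ (univ.image V)) fun a _ ha => ?_]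
  · refine Finset.sum_image' _ fun ω _ => ?_
    have hcard : (#{ω' | V ω' = V ω} : ℝ) ≠ 0 := by
      exact_mod_cast (Finset.card_pos.2 ⟨ω, by simp⟩).ne'
    rw [Finset.sum_congr rfl fun ω' hω' => by rw [(Finset.mem_filter.1 hω').2],
      Finset.sum_const, nsmul_eq_mul, mul_div_cancel₀ _ hcard]
  · have : distOf μ V a = 0 :=
      Finset.sum_eq_zero fun ω hω => absurd (mem_image_of_mem V (mem_univ ω))
        ((Finset.mem_filter.1 hω).2 ▸ ha)
    rw [this, h0]

lemma thc_distOf_congr [Fintype A] [Fintype B] (hα : α ≠ 0) (hμ1 : ∑ ω, μ ω = 1)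
    {V : Ω → A} {V' : Ω → B} (h : ∀ ω ω', V ω' = V ω ↔ V' ω' = V' ω) :
    thc α (distOf μ V) = thc α (distOf μ V') := by
  rw [thc_eq_sum_thcTerm _ ((sum_distOf V).trans hμ1), thc_eq_sum_thcTerm _
    ((sum_distOf V').trans hμ1), sum_distOf_eq_sum_fiber (thcTerm_zero hα),
    sum_distOf_eq_sum_fiber (thcTerm_zero hα)]
  refine Finset.sum_congr rfl fun ω _ => ?_
  rw [distOf_congr (h ω), Finset.filter_congr fun ω' _ => h ω ω']

lemma thc_distOf_le_thc_distOf_pair [Fintype A] [Fintype B] (hα : 1 ≤ α)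
    (hμ : ∀ ω, 0 ≤ μ ω) (hμ1 : ∑ ω, μ ω = 1) (Y : Ω → A) (Z : Ω → B) :
    thc α (distOf μ Z) ≤ thc α (distOf μ (fun ω => (Y ω, Z ω))) := by
  rw [thc_eq_thc_add_condThc1 (by linarith) (distOf_nonneg_s11 hμ _)
    ((sum_distOf _).trans hμ1)]
  simp only [sum_distOf_pair]
  linarith [condThc1_nonneg hα (distOf_nonneg_s11 hμ (fun ω => (Y ω, Z ω)))]

theorem thc_distOf_strong_subadditive [Fintype A] [Fintype B] [Fintype C] (hα : 1 ≤ α)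
    (hμ : ∀ ω, 0 ≤ μ ω) (hμ1 : ∑ ω, μ ω = 1) (Y : Ω → A) (Z : Ω → B) (W : Ω → C) :
    thc α (distOf μ (fun ω => (Y ω, (Z ω, W ω)))) + thc α (distOf μ W) ≤
      thc α (distOf μ (fun ω => (Y ω, W ω))) + thc α (distOf μ (fun ω => (Z ω, W ω))) := by
  have hα0 : α ≠ 0 := by linarith
  rw [thc_eq_thc_add_condThc1 hα0 (distOf_nonneg_s11 hμ _) ((sum_distOf _).trans hμ1),
    thc_eq_thc_add_condThc1 hα0 (distOf_nonneg_s11 hμ (fun ω => (Y ω, W ω)))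
      ((sum_distOf _).trans hμ1)]
  simp only [sum_distOf_pair]
  have hmarg : (fun ac : A × C => ∑ b, distOf μ (fun ω => (Y ω, (Z ω, W ω))) (ac.1, (b, ac.2)))
      = distOf μ (fun ω => (Y ω, W ω)) := by
    funext ac
    rw [← sum_distOf_pair Z (fun ω => (Y ω, W ω))]
    exact Finset.sum_congr rfl fun b _ => distOf_congr fun ω => by
      simp only [Prod.ext_iff]; tauto
  have hcond := condThc1_le_condThc1_marginal hα (distOf_nonneg_s11 hμ (fun ω => (Y ω, (Z ω, W ω))))
  rw [hmarg] at hcond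
  linarith

end distOf

section Shearer

variable {ι κ : Type*} [Fintype ι] [LinearOrder ι] [Fintype κ]

def prefixIncrement (f : Finset ι → ℝ) (j : ι) : ℝ :=
  f (insert j ({i | i < j} : Finset ι)) - f {i | i < j}

lemma prefixIncrement_nonneg {f : Finset ι → ℝ} (hmono : Monotone f) (j : ι) :
    0 ≤ prefixIncrement f j :=
  sub_nonneg.2 (hmono (subset_insert _ _))

lemma sum_prefixIncrement_le {f : Finset ι → ℝ} (hf0 : f ∅ = 0)
    (hsub : ∀ A B, f (A ∪ B) + f (A ∩ B) ≤ f A + f B) (T : Finset ι) :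
    ∑ j ∈ T, prefixIncrement f j ≤ f T := by
  induction T using Finset.induction_on_max with
  | empty => simp [hf0]
  | insert a s hs ih =>
    have hs_lt : s ⊆ ({i | i < a} : Finset ι) := fun x hx => by simpa using hs x hx
    have hunion : insert a s ∪ ({i | i < a} : Finset ι) = insert a ({i | i < a} : Finset ι) := by
      rw [insert_union, union_eq_right.2 hs_lt]
    have hinter : insert a s ∩ ({i | i < a} : Finset ι) = s := by
      rw [insert_inter_of_notMem (by simp), inter_eq_left.2 hs_lt]
    have := hsub (insert a s) ({i | i < a} : Finset ι)
    rw [hunion, hinter] at this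
    rw [sum_insert fun h => (hs a h).false, prefixIncrement]
    linarith

lemma isLowerSet_and_eq_filter_lt_of_insert {a : ι} {s : Finset ι} (hs : ∀ x ∈ s, x < a)
    (hlow : IsLowerSet (insert a s : Set ι)) :
    IsLowerSet (s : Set ι) ∧ s = ({i | i < a} : Finset ι) := by
  refine ⟨fun x y hyx hx => ?_, Finset.ext fun x => ⟨fun hx => by simpa using hs x hx, ?_⟩⟩
  · have hy : y ∈ (insert a s : Set ι) := hlow hyx (Set.mem_insert_of_mem a hx)
    exact hy.resolve_left (hyx.trans_lt (hs x hx)).ne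
  · intro hx
    have hx : x < a := by simpa using hx
    exact (hlow hx.le (Set.mem_insert a _)).resolve_left hx.ne

lemma sum_prefixIncrement_of_isLowerSet {f : Finset ι → ℝ} (hf0 : f ∅ = 0) {T : Finset ι}
    (hT : IsLowerSet (T : Set ι)) : ∑ j ∈ T, prefixIncrement f j = f T := by
  induction T using Finset.induction_on_max with
  | empty => simp [hf0]
  | insert a s hs ih =>
    obtain ⟨hs_low, rfl⟩ := isLowerSet_and_eq_filter_lt_of_insert hs (by simpa using hT)
    rw [sum_insert fun h => (hs a h).false, ih hs_low, prefixIncrement, sub_add_cancel]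

theorem mul_le_sum_of_submodular {f : Finset ι → ℝ} (hf0 : f ∅ = 0) (hmono : Monotone f)
    (hsub : ∀ A B, f (A ∪ B) + f (A ∩ B) ≤ f A + f B) (G : κ → Finset ι) {k : ℕ}
    (hcov : ∀ j, k ≤ #{i | j ∈ G i}) :
    k * f univ ≤ ∑ i, f (G i) :=
  calc (k : ℝ) * f univ = ∑ j, k * prefixIncrement f j := by
        rw [← mul_sum, sum_prefixIncrement_of_isLowerSet hf0 (by simpa using isLowerSet_univ)]
    _ ≤ ∑ j, #{i | j ∈ G i} * prefixIncrement f j :=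
        sum_le_sum fun j _ => by gcongr; exacts [prefixIncrement_nonneg hmono j, hcov j]
    _ = ∑ i, ∑ j ∈ G i, prefixIncrement f j := by
        simp_rw [card_eq_sum_ones, Nat.cast_sum, Nat.cast_one, sum_mul, one_mul, sum_filter]
        rw [sum_comm]
        simp [sum_ite_mem]
    _ ≤ ∑ i, f (G i) := sum_le_sum fun i _ => sum_prefixIncrement_le hf0 hsub (G i)

end Shearer

section thcOn

variable {Ω ι : Type*} [Fintype Ω] [DecidableEq ι] {S : ι → Type*} [∀ i, Fintype (S i)]
  [∀ i, DecidableEq (S i)] {μ : Ω → ℝ} {X : ∀ i, Ω → S i} {α : ℝ}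

noncomputable def thcOn (μ : Ω → ℝ) (X : ∀ i, Ω → S i) (α : ℝ) (T : Finset ι) : ℝ :=
  thc α (distOf μ (fun ω (j : T) => X j ω))

lemma thcOn_eq_thc_distOf {A : Type*} [Fintype A] [DecidableEq A] (hα : α ≠ 0)
    (hμ1 : ∑ ω, μ ω = 1) (T : Finset ι) {V : Ω → A}
    (hV : ∀ ω ω', V ω' = V ω ↔ ∀ j ∈ T, X j ω' = X j ω) :
    thcOn μ X α T = thc α (distOf μ V) :=
  thc_distOf_congr hα hμ1 fun ω ω' => by simp [funext_iff, hV]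

lemma thcOn_empty (hα : α ≠ 0) (hμ1 : ∑ ω, μ ω = 1) : thcOn μ X α ∅ = 0 := by
  rw [thcOn_eq_thc_distOf hα hμ1 ∅ (V := fun _ => ()) (by simp)]
  simp [thc, distOf, hμ1]

lemma thcOn_mono (hα : 1 ≤ α) (hμ : ∀ ω, 0 ≤ μ ω) (hμ1 : ∑ ω, μ ω = 1) :
    Monotone (thcOn μ X α) := by
  intro A B hAB
  rw [thcOn_eq_thc_distOf (by linarith) hμ1 B
    (V := fun ω => ((fun j : B => X j ω), (fun j : A => X j ω))) fun ω ω' => by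
      simp only [Prod.ext_iff, funext_iff, Subtype.forall]
      exact ⟨fun h => h.1, fun h => ⟨h, fun j hj => h j (hAB hj)⟩⟩]
  exact thc_distOf_le_thc_distOf_pair hα hμ hμ1 _ _

lemma thcOn_union_add_inter_le (hα : 1 ≤ α) (hμ : ∀ ω, 0 ≤ μ ω) (hμ1 : ∑ ω, μ ω = 1)
    (A B : Finset ι) :
    thcOn μ X α (A ∪ B) + thcOn μ X α (A ∩ B) ≤ thcOn μ X α A + thcOn μ X α B := by
  have hα0 : α ≠ 0 := by linarith
  let XA := fun ω (j : A) => X j ω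
  let XB := fun ω (j : B) => X j ω
  let XAB := fun ω (j : (A ∩ B : Finset ι)) => X j ω
  rw [thcOn_eq_thc_distOf hα0 hμ1 (A ∪ B) (V := fun ω => (XA ω, (XB ω, XAB ω))) ?union,
    thcOn_eq_thc_distOf hα0 hμ1 A (V := fun ω => (XA ω, XAB ω)) ?left,
    thcOn_eq_thc_distOf hα0 hμ1 B (V := fun ω => (XB ω, XAB ω)) ?right]
  case union | left | right =>
    intro ω ω'
    simp only [XA, XB, XAB, Prod.ext_iff, funext_iff, Subtype.forall, mem_union, mem_inter]
    grind
  exact thc_distOf_strong_subadditive hα hμ hμ1 XA XB XAB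

end thcOn

/-- **THC-entropy Shearer lemma.** Let `X = (X₁, …, Xₙ)` take values in a
finite product set, and let `𝓖 = {G₁, …, G_m}` be a family of subsets of `{1, …, n}` such
that every `j` belongs to at least `k` members.  Then for every `α ≥ 1`:
`k · H_α(X) ≤ Σ_{G ∈ 𝓖} H_α(X(G))`. -/
theorem thc_shearer {Ω : Type*} [Fintype Ω] (n m k : ℕ) (S : Fin n → Type*)
    [∀ i, Fintype (S i)] [∀ i, DecidableEq (S i)]
    (μ : Ω → ℝ) (hμ : ∀ ω, 0 ≤ μ ω) (hμ1 : ∑ ω, μ ω = 1)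
    (X : ∀ i : Fin n, Ω → S i)
    (G : Fin m → Finset (Fin n))
    (hcov : ∀ j : Fin n, k ≤ (Finset.univ.filter (fun i => j ∈ G i)).card)
    (α : ℝ) (hα : 1 ≤ α) :
    (k : ℝ) * thc α (distOf μ (fun ω => fun j : Fin n => X j ω)) ≤
      ∑ i : Fin m, thc α (distOf μ (fun ω => fun j : (G i : Finset (Fin n)) => X j.1 ω)) := by
  have hα0 : α ≠ 0 := by linarith
  rw [← thcOn_eq_thc_distOf (X := X) hα0 hμ1 univ (V := fun ω j => X j ω) (by simp [funext_iff])]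
  exact mul_le_sum_of_submodular (thcOn_empty hα0 hμ1) (thcOn_mono hα hμ hμ1)
    (thcOn_union_add_inter_le hα hμ hμ1) G hcov
end
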